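/- For every ε > 0 and every compactly supported smooth ψ : ℝ → ℂ, ∫ (|ψ'(t)|² + V(ε,t)|ψ(t)|²) dt ≥ -(ε/4) ∫ |ψ(t)|² dt, where V(ε,t) = t²/(2√(1+εt²)) - 1/(√2 (1+εt²)^{1/4}). -/

import Mathlib

open MeasureTheory

noncomputable def fa (ε t : ℝ) : ℝ :=
  t / (Real.sqrt 2 * (1 + ε * t ^ 2) ^ ((1:ℝ)/4)) - ε * t / (4 * (1 + ε * t ^ 2))

noncomputable def fa' (ε t : ℝ) : ℝ :=
  (1 / (1 + ε * t ^ 2) ^ ((1:ℝ)/4)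
    + 1 / ((1 + ε * t ^ 2) ^ ((1:ℝ)/4) * (1 + ε * t ^ 2))) / (2 * Real.sqrt 2)
  - ε * (2 - (1 + ε * t ^ 2)) / (4 * (1 + ε * t ^ 2) ^ 2)

lemma hasDerivAt_fa (ε : ℝ) (hε : 0 < ε) (t : ℝ) :
    HasDerivAt (fa ε) (fa' ε t) t := by
  have hu : (0:ℝ) < 1 + ε * t ^ 2 := by positivity
  have hU : HasDerivAt (fun t : ℝ => 1 + ε * t ^ 2) (2 * ε * t) t := by
    have := ((hasDerivAt_pow 2 t).const_mul ε).const_add 1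
    refine this.congr_deriv ?_
    simp; ring
  have hW : HasDerivAt (fun t : ℝ => (1 + ε * t ^ 2) ^ ((1:ℝ)/4))
      ((2 * ε * t) * ((1:ℝ)/4) * (1 + ε * t ^ 2) ^ ((1:ℝ)/4 - 1)) t :=
    hU.rpow_const (Or.inl hu.ne')
  have hsw : Real.sqrt 2 * (1 + ε * t ^ 2) ^ ((1:ℝ)/4) ≠ 0 := by positivity
  have hA := (hasDerivAt_id t).div (hW.const_mul (Real.sqrt 2)) hsw
  have hB := ((hasDerivAt_id t).const_mul ε).div (hU.const_mul 4) (by positivity)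
  have h := hA.sub hB
  refine (h : HasDerivAt (fa ε) _ t).congr_deriv (Eq.symm ?_)
  have hr : (1 + ε * t ^ 2) ^ ((1:ℝ)/4 - 1)
      = (1 + ε * t ^ 2) ^ ((1:ℝ)/4) / (1 + ε * t ^ 2) := by
    rw [Real.rpow_sub hu, Real.rpow_one]
  rw [hr]
  unfold fa'
  set s := Real.sqrt 2 with hsdef
  have hs0 : (0:ℝ) < s := by rw [hsdef]; positivity
  set w := (1 + ε * t ^ 2) ^ ((1:ℝ)/4) with hwdef
  have hw0 : (0:ℝ) < w := by rw [hwdef]; positivity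
  field_simp
  simp only [id]
  ring

lemma alg (ε t s w : ℝ) (hs0 : s ≠ 0) (hw0 : w ≠ 0)
    (hu0 : 1 + ε * t ^ 2 ≠ 0) :
    (t/(s*w) - ε*t/(4*(1 + ε * t ^ 2)))^2
      - ((1/w + 1/(w*(1 + ε * t ^ 2)))/(2*s)
        - ε*(2-(1 + ε * t ^ 2))/(4*(1 + ε * t ^ 2)^2))
    = t^2/(s^2*w^2) - 1/(s*w) + ε*(7-3*(1 + ε * t ^ 2))/(16*(1 + ε * t ^ 2)^2) := by
  set u := 1 + ε * t ^ 2 with hu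
  field_simp
  ring

lemma pointwise_bound (ε : ℝ) (hε : 0 < ε) (t : ℝ) :
    fa ε t ^ 2 - fa' ε t ≤
      t ^ 2 / (2 * Real.sqrt (1 + ε * t ^ 2))
        - 1 / (Real.sqrt 2 * (1 + ε * t ^ 2) ^ ((1 : ℝ) / 4)) + ε / 4 := by
  have hu : (0:ℝ) < 1 + ε * t ^ 2 := by positivity
  set w := (1 + ε * t ^ 2) ^ ((1:ℝ)/4) with hwdef
  have hw0 : (0:ℝ) < w := by rw [hwdef]; positivity
  have hsqrt : Real.sqrt (1 + ε * t ^ 2) = w ^ 2 := by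
    rw [hwdef, ← Real.rpow_natCast ((1 + ε * t ^ 2) ^ ((1:ℝ)/4)) 2,
      ← Real.rpow_mul hu.le, Real.sqrt_eq_rpow]
    norm_num
  have hs0 : (0:ℝ) < Real.sqrt 2 := by positivity
  have hs2 : Real.sqrt 2 ^ 2 = 2 := Real.sq_sqrt (by norm_num)
  rw [hsqrt]
  unfold fa fa'
  rw [← hwdef, alg ε t _ w hs0.ne' hw0.ne' hu.ne', hs2]
  have : ε*(7-3*(1 + ε * t ^ 2))/(16*(1 + ε * t ^ 2)^2) ≤ ε / 4 := by
    rw [div_le_div_iff₀ (by positivity) (by norm_num)]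
    nlinarith [mul_nonneg hε.le (sq_nonneg (ε * t ^ 2)),
      mul_nonneg hε.le (mul_nonneg hε.le (sq_nonneg t))]
  linarith

lemma contDiff_fa (ε : ℝ) (hε : 0 < ε) : ContDiff ℝ (⊤ : ℕ∞) (fa ε) := by
  have h1 : ContDiff ℝ (⊤ : ℕ∞) (fun t : ℝ => 1 + ε * t ^ 2) :=
    contDiff_const.add (contDiff_const.mul (contDiff_id.pow 2))
  have h2 : ContDiff ℝ (⊤ : ℕ∞) (fun t : ℝ => (1 + ε * t ^ 2) ^ ((1:ℝ)/4)) :=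
    h1.rpow_const_of_ne (fun t => by positivity)
  exact (contDiff_id.div (contDiff_const.mul h2) (fun t => by positivity)).sub
    ((contDiff_const.mul contDiff_id).div (contDiff_const.mul h1) (fun t => by positivity))

lemma integral_deriv_zero' {F : ℝ → ℝ} (hF : ContDiff ℝ 1 F) (hFc : HasCompactSupport F) :
    ∫ x : ℝ, deriv F x = 0 := by
  have hint : Integrable (deriv F) :=
    (hF.continuous_deriv le_rfl).integrable_of_hasCompactSupport hFc.deriv
  rw [← intervalIntegral.integral_Iic_add_Ioi (b := (0:ℝ)) hint.integrableOn hint.integrableOn,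
    hFc.integral_Iic_deriv_eq hF 0, hFc.integral_Ioi_deriv_eq hF 0]
  ring

lemma norm_sq_complex (z : ℂ) : ‖z‖ ^ 2 = z.re ^ 2 + z.im ^ 2 := by
  rw [Complex.sq_norm, Complex.normSq_apply]; ring

/-- Quadratic-form lower bound `Ĥ(ε) ≥ -ε/4` for
`Ĥ(ε) = -∂_t² + t²/(2√(1+εt²)) - 1/(√2 (1+εt²)^{1/4})`. -/
theorem hHat_form_lower_bound (ε : ℝ) (hε : 0 < ε)
    (ψ : ℝ → ℂ) (hψ : ContDiff ℝ (⊤ : ℕ∞) ψ) (hψc : HasCompactSupport ψ) :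
    -(ε / 4) * ∫ t : ℝ, ‖ψ t‖ ^ 2 ≤
      ∫ t : ℝ, (‖deriv ψ t‖ ^ 2 +
        (t ^ 2 / (2 * Real.sqrt (1 + ε * t ^ 2))
          - 1 / (Real.sqrt 2 * (1 + ε * t ^ 2) ^ ((1 : ℝ) / 4))) * ‖ψ t‖ ^ 2) := by
  -- basic continuity facts
  have hψcont : Continuous ψ := hψ.continuous
  have hdc : Continuous (deriv ψ) := hψ.continuous_deriv (by simp)
  have hψd : ∀ t, HasDerivAt ψ (deriv ψ t) t :=
    fun t => ((hψ.differentiable (by simp)) t).hasDerivAt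
  -- g = |ψ|² and its derivative gd
  set g : ℝ → ℝ := fun t => ‖ψ t‖ ^ 2 with hgdef
  set gd : ℝ → ℝ := fun t =>
    2 * ((ψ t).re * (deriv ψ t).re + (ψ t).im * (deriv ψ t).im) with hgddef
  have hg2 : g = fun t => (ψ t).re ^ 2 + (ψ t).im ^ 2 :=
    funext fun t => norm_sq_complex (ψ t)
  have hgsm : ContDiff ℝ (⊤ : ℕ∞) g := by
    rw [hg2]
    exact ((Complex.reCLM.contDiff.comp hψ).pow 2).add
      ((Complex.imCLM.contDiff.comp hψ).pow 2)
  have hgcs : HasCompactSupport g :=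
    hψc.comp_left (g := fun z : ℂ => ‖z‖ ^ 2) (by simp)
  have hgd : ∀ t, HasDerivAt g (gd t) t := by
    intro t
    have hre : HasDerivAt (fun s => (ψ s).re) (deriv ψ t).re t :=
      Complex.reCLM.hasFDerivAt.comp_hasDerivAt t (hψd t)
    have him : HasDerivAt (fun s => (ψ s).im) (deriv ψ t).im t :=
      Complex.imCLM.hasFDerivAt.comp_hasDerivAt t (hψd t)
    have h := (hre.pow 2).add (him.pow 2)
    rw [hg2]
    refine h.congr_deriv (Eq.symm ?_)
    simp [hgddef]; ring
  -- f and its properties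
  have hfa_cd : ContDiff ℝ (⊤ : ℕ∞) (fa ε) := contDiff_fa ε hε
  have hfa'c : Continuous (fa' ε) := by
    have hd : deriv (fa ε) = fa' ε := funext fun t => (hasDerivAt_fa ε hε t).deriv
    rw [← hd]
    exact hfa_cd.continuous_deriv (by simp)
  -- the divergence term D integrates to zero
  set D : ℝ → ℝ := fun t => fa' ε t * g t + fa ε t * gd t with hDdef
  have hFder : ∀ t, HasDerivAt (fun t => fa ε t * g t) (D t) t :=
    fun t => (hasDerivAt_fa ε hε t).mul (hgd t)
  have hD0 : ∫ t : ℝ, D t = 0 := by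
    have h1 : ∀ t, D t = deriv (fun t => fa ε t * g t) t :=
      fun t => ((hFder t).deriv).symm
    calc ∫ t : ℝ, D t = ∫ t : ℝ, deriv (fun t => fa ε t * g t) t := by
          congr 1; funext t; exact h1 t
      _ = 0 := integral_deriv_zero' ((hfa_cd.mul hgsm).of_le (by simp)) hgcs.mul_left
  -- integrability
  have hI1 : Integrable (fun t : ℝ => ‖deriv ψ t‖ ^ 2) := by
    have h2 := hψc.deriv.comp_left (g := fun z : ℂ => ‖z‖ ^ 2) (by simp)
    exact ((hdc.norm.pow 2)).integrable_of_hasCompactSupport h2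
  have hgint : Integrable g := hgsm.continuous.integrable_of_hasCompactSupport hgcs
  have hgdcs : HasCompactSupport gd := by
    have h1 : HasCompactSupport (fun t => (ψ t).re) :=
      hψc.comp_left (g := Complex.re) Complex.zero_re
    have h2 : HasCompactSupport (fun t => (ψ t).im) :=
      hψc.comp_left (g := Complex.im) Complex.zero_im
    have h3 : HasCompactSupport
        (fun t => (ψ t).re * (deriv ψ t).re + (ψ t).im * (deriv ψ t).im) :=
      (h1.mul_right).add (h2.mul_right)
    exact h3.mul_left
  have hgdc : Continuous gd := by
    apply Continuous.mul continuous_const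
    exact ((Complex.continuous_re.comp hψcont).mul
      (Complex.continuous_re.comp hdc)).add
      ((Complex.continuous_im.comp hψcont).mul (Complex.continuous_im.comp hdc))
  set P : ℝ → ℝ := fun t => ‖deriv ψ t‖ ^ 2 + (fa ε t ^ 2 - fa' ε t) * g t with hPdef
  have hPint : Integrable P := by
    apply hI1.add
    exact ((((hfa_cd.continuous).pow 2).sub hfa'c).mul hgsm.continuous)
      |>.integrable_of_hasCompactSupport hgcs.mul_left
  have hDint : Integrable D := by
    apply ((hfa'c.mul hgsm.continuous).integrable_of_hasCompactSupport hgcs.mul_left).add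
    exact ((hfa_cd.continuous).mul hgdc).integrable_of_hasCompactSupport hgdcs.mul_left
  -- positivity of ∫ P
  have hQ : ∀ t, ‖deriv ψ t + (fa ε t : ℂ) * ψ t‖ ^ 2 = P t + D t := by
    intro t
    rw [hPdef, hDdef]
    simp only [norm_sq_complex, Complex.add_re, Complex.add_im, Complex.mul_re,
      Complex.mul_im, Complex.ofReal_re, Complex.ofReal_im, hgddef, hgdef]
    ring
  have h0' : (0:ℝ) ≤ ∫ t : ℝ, ‖deriv ψ t + (fa ε t : ℂ) * ψ t‖ ^ 2 :=
    integral_nonneg (fun t => by positivity)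
  have h0 : (0:ℝ) ≤ ∫ t : ℝ, (P t + D t) := by
    calc (0:ℝ) ≤ ∫ t : ℝ, ‖deriv ψ t + (fa ε t : ℂ) * ψ t‖ ^ 2 := h0'
      _ = ∫ t : ℝ, (P t + D t) := by congr 1; funext t; exact hQ t
  have hPpos : (0:ℝ) ≤ ∫ t : ℝ, P t := by
    rw [integral_add hPint hDint] at h0
    linarith
  -- compare with the target integrand
  set T : ℝ → ℝ := fun t => ‖deriv ψ t‖ ^ 2 +
      (t ^ 2 / (2 * Real.sqrt (1 + ε * t ^ 2))
        - 1 / (Real.sqrt 2 * (1 + ε * t ^ 2) ^ ((1 : ℝ) / 4))) * g t with hTdef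
  have hVc : Continuous (fun t : ℝ => t ^ 2 / (2 * Real.sqrt (1 + ε * t ^ 2))
      - 1 / (Real.sqrt 2 * (1 + ε * t ^ 2) ^ ((1 : ℝ) / 4))) := by
    have h1 : Continuous (fun t : ℝ => 1 + ε * t ^ 2) := by continuity
    apply Continuous.sub
    · exact (continuous_pow 2).div (continuous_const.mul (Real.continuous_sqrt.comp h1))
        (fun t => by positivity)
    · exact continuous_const.div
        (continuous_const.mul (h1.rpow_const fun t => Or.inl (by positivity)))
        (fun t => by positivity)
  have hTint : Integrable T :=
    hI1.add ((hVc.mul hgsm.continuous).integrable_of_hasCompactSupport hgcs.mul_left)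
  have hmono : ∫ t : ℝ, P t ≤ ∫ t : ℝ, (T t + ε / 4 * g t) := by
    apply integral_mono hPint (hTint.add (hgint.const_mul _))
    intro t
    have hb := pointwise_bound ε hε t
    have hg0 : 0 ≤ g t := by rw [hgdef]; positivity
    have := mul_le_mul_of_nonneg_right hb hg0
    simp only [hPdef, hTdef, Pi.add_apply]
    linarith [this]
  have hsplit : ∫ t : ℝ, (T t + ε / 4 * g t) =
      (∫ t : ℝ, T t) + ε / 4 * ∫ t : ℝ, g t := by
    rw [integral_add hTint (hgint.const_mul _), integral_const_mul]
  have hfin : -(ε / 4) * ∫ t : ℝ, g t ≤ ∫ t : ℝ, T t := by linarith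
  exact hfin
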